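/- For even n, the limit as r → 0⁺ of Ω_n(r) (defined by the double finite sum formula with ₂F₁ functions) equals 2·(-1)^{n/2+1}·(2^{n/2} - 1)·n! / ((n/2 + 1)!). -/

import Mathlib

/-!
Every ₂F₁ series has a positive radius of convergence (radius 1, or infinite when a parameter is a
non-positive integer), so `r ↦ ₂F₁(a, b; c; r²)` is continuous at `0` with value `1`. The
`(k, j)` summand therefore behaves like `r^(2j-k+1) / Γ(2+2j-k)`: it tends to `0` when
`2j - k + 1 > 0`, vanishes identically when `2 + 2j - k` is a non-positive integer (`1/Γ = 0`),
and only `k = 2j + 1` survives. For `n = 2p` the surviving coefficients are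
`-n! / ((p-j)! (j+1)!)`, `j < p`, whose sum is `-(2^(p+1) - 2) n! / (p+1)!` by the binomial theorem.
-/

open Real Filter

/-- Pochhammer (rising factorial) symbol `(a)_k`. -/
noncomputable def poch (a : ℝ) (k : ℕ) : ℝ := ∏ i ∈ Finset.range k, (a + i)

/-- Gauss hypergeometric series `₂F₁(a,b;c;z)`. -/
noncomputable def F21 (a b c z : ℝ) : ℝ :=
  ∑' k : ℕ, poch a k * poch b k / poch c k * z^k / (k.factorial : ℝ)

/-- The coefficient `Ω_n` (for even `n`) given by the double finite sum of Eq. (32),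
for real `r`; terms with non-positive Gamma arguments vanish via `1/Γ = 0`. -/
noncomputable def OmegaEven (n : ℕ) (r : ℝ) : ℝ :=
  (-1:ℝ)^(n/2) * ∑ k ∈ Finset.range (n+1), ∑ j ∈ Finset.range (k+1),
    ((-1:ℝ)^k * (n.factorial : ℝ) /
        Real.Gamma ((n:ℝ)/2 - j + 1) / Real.Gamma ((k:ℝ) - j + 1)) *
    (F21 (1 + (j:ℝ)) (1 + (j:ℝ) - k + (n:ℝ)/2) (2 + 2*(j:ℝ) - k) (r^2) /
        Real.Gamma (2 + 2*(j:ℝ) - k)) *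
    r ^ (2*(j:ℤ) - (k:ℤ) + 1)

open Topology Finset Nat

lemma poch_eq_ascPochhammer_eval (a : ℝ) (k : ℕ) : poch a k = (ascPochhammer ℝ k).eval a := by
  induction k with
  | zero => simp [poch]
  | succ k ih => rw [poch, prod_range_succ, ← poch, ih, ascPochhammer_succ_eval]

lemma F21_eq_ordinaryHypergeometric (a b c z : ℝ) : F21 a b c z = ₂F₁ a b c z := by
  rw [ordinaryHypergeometric_eq_tsum, F21]
  refine tsum_congr fun k => ?_
  simp only [poch_eq_ascPochhammer_eval, smul_eq_mul]
  ring

lemma ordinaryHypergeometricSeries_radius_pos {𝕂 : Type*} (𝔸 : Type*) [RCLike 𝕂]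
    [NormedDivisionRing 𝔸] [NormedAlgebra 𝕂 𝔸] (a b c : 𝕂) :
    0 < (ordinaryHypergeometricSeries 𝔸 a b c).radius := by
  by_cases h : ∃ k : ℕ, (k : 𝕂) = -a ∨ (k : 𝕂) = -b ∨ (k : 𝕂) = -c
  · obtain ⟨k, hk | hk | hk⟩ := h
    · rw [neg_eq_iff_eq_neg.mp hk.symm, ordinaryHypergeometric_radius_top_of_neg_nat₁]
      exact ENNReal.zero_lt_top
    · rw [neg_eq_iff_eq_neg.mp hk.symm, ordinaryHypergeometric_radius_top_of_neg_nat₂]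
      exact ENNReal.zero_lt_top
    · rw [neg_eq_iff_eq_neg.mp hk.symm, ordinaryHypergeometric_radius_top_of_neg_nat₃]
      exact ENNReal.zero_lt_top
  · push Not at h
    rw [ordinaryHypergeometricSeries_radius_eq_one 𝔸 a b c h]
    exact one_pos

lemma continuousAt_ordinaryHypergeometric_zero {𝕂 : Type*} (𝔸 : Type*) [RCLike 𝕂]
    [NormedDivisionRing 𝔸] [NormedAlgebra 𝕂 𝔸] [CompleteSpace 𝔸] (a b c : 𝕂) :
    ContinuousAt (₂F₁ a b c : 𝔸 → 𝔸) 0 :=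
  ((ordinaryHypergeometricSeries 𝔸 a b c).hasFPowerSeriesOnBall
    (ordinaryHypergeometricSeries_radius_pos 𝔸 a b c)).continuousOn.continuousAt
    (Metric.eball_mem_nhds 0 (ordinaryHypergeometricSeries_radius_pos 𝔸 a b c))

lemma tendsto_F21_nhds_zero (a b c : ℝ) : Tendsto (F21 a b c) (𝓝 0) (𝓝 1) := by
  have h := continuousAt_ordinaryHypergeometric_zero ℝ a b c
  rw [ContinuousAt, ordinaryHypergeometric_zero] at h
  simpa only [funext (F21_eq_ordinaryHypergeometric a b c)] using h

lemma tendsto_F21_sq_div_Gamma_mul_zpow (a b : ℝ) (j k : ℕ) :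
    Tendsto (fun r : ℝ => F21 a b (2 + 2 * j - k) (r ^ 2) / Gamma (2 + 2 * j - k) *
      r ^ (2 * (j : ℤ) - k + 1)) (𝓝 0) (𝓝 (if k = 2 * j + 1 then 1 else 0)) := by
  have hF (c : ℝ) : Tendsto (fun r : ℝ => F21 a b c (r ^ 2)) (𝓝 0) (𝓝 1) :=
    (tendsto_F21_nhds_zero a b c).comp ((continuous_pow 2).tendsto' 0 0 (zero_pow two_ne_zero))
  rcases lt_trichotomy k (2 * j + 1) with hk | rfl | hk
  · obtain ⟨m, hm⟩ : ∃ m, 2 * j = k + m := ⟨2 * j - k, by omega⟩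
    have hexp : 2 * (j : ℤ) - k + 1 = ((m + 1 : ℕ) : ℤ) := by omega
    simp only [hexp, zpow_natCast, if_neg hk.ne]
    simpa using ((hF _).div_const _).mul ((continuous_pow (m + 1)).tendsto' 0 0 (by simp))
  · have hc : 2 + 2 * (j : ℝ) - ((2 * j + 1 : ℕ) : ℝ) = 1 := by push_cast; ring
    have hexp : 2 * (j : ℤ) - ((2 * j + 1 : ℕ) : ℤ) + 1 = 0 := by omega
    simpa only [hc, hexp, Gamma_one, div_one, zpow_zero, mul_one, if_true] using hF 1
  · obtain ⟨m, rfl⟩ : ∃ m, k = 2 * j + 2 + m := ⟨k - (2 * j + 2), by omega⟩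
    have hc : 2 + 2 * (j : ℝ) - ((2 * j + 2 + m : ℕ) : ℝ) = -m := by push_cast; ring
    simp only [hc, Gamma_neg_nat_eq_zero, div_zero, zero_mul, if_neg hk.ne']
    exact tendsto_const_nhds

lemma sum_range_sum_range_ite_eq_two_mul_add_one {M : Type*} [AddCommMonoid M]
    (f : ℕ → ℕ → M) (p : ℕ) :
    ∑ k ∈ range (2 * p + 1), ∑ j ∈ range (k + 1), (if k = 2 * j + 1 then f k j else 0) =
      ∑ m ∈ range p, f (2 * m + 1) m := by
  induction p with
  | zero => simp
  | succ p ih =>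
    have hodd : ∑ j ∈ range (2 * p + 1 + 1),
        (if 2 * p + 1 = 2 * j + 1 then f (2 * p + 1) j else 0) = f (2 * p + 1) p := by
      rw [sum_eq_single p (fun j _ hj => if_neg (by omega)) (fun h => by simp at h; omega),
        if_pos rfl]
    have heven : ∑ j ∈ range (2 * p + 2 + 1),
        (if 2 * p + 2 = 2 * j + 1 then f (2 * p + 2) j else 0) = 0 :=
      sum_eq_zero fun j _ => if_neg (by omega)
    rw [show 2 * (p + 1) + 1 = 2 * p + 1 + 1 + 1 by ring, sum_range_succ, sum_range_succ, ih,
      hodd, heven, add_zero, sum_range_succ]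

lemma sum_range_choose_succ_succ (p : ℕ) :
    ∑ m ∈ range p, ((p + 1).choose (m + 1) : ℝ) = 2 ^ (p + 1) - 2 := by
  have h := Nat.sum_range_choose (p + 1)
  rw [sum_range_succ, sum_range_succ'] at h
  simp only [Nat.choose_self, Nat.choose_zero_right] at h
  have hR : ∑ m ∈ range p, ((p + 1).choose (m + 1) : ℝ) + 1 + 1 = 2 ^ (p + 1) := mod_cast h
  linarith

lemma sum_range_inv_factorial_mul_factorial (p : ℕ) :
    ∑ m ∈ range p, (((p - m)! : ℝ) * (m + 1)!)⁻¹ = (2 ^ (p + 1) - 2) / (p + 1)! := by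
  rw [← sum_range_choose_succ_succ, sum_div]
  refine sum_congr rfl fun m hm => ?_
  have hmp : m + 1 ≤ p + 1 := by simp at hm; omega
  rw [Nat.cast_choose ℝ hmp, show p + 1 - (m + 1) = p - m by omega]
  field_simp

noncomputable def omegaEvenCoeff (n k j : ℕ) : ℝ :=
  (-1) ^ k * n ! / Gamma ((n : ℝ) / 2 - j + 1) / Gamma ((k : ℝ) - j + 1)

lemma OmegaEven_eq_sum_omegaEvenCoeff (n : ℕ) (r : ℝ) :
    OmegaEven n r = (-1) ^ (n / 2) * ∑ k ∈ range (n + 1), ∑ j ∈ range (k + 1),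
      omegaEvenCoeff n k j * (F21 (1 + j) (1 + j - k + (n : ℝ) / 2) (2 + 2 * j - k) (r ^ 2) /
        Gamma (2 + 2 * j - k) * r ^ (2 * (j : ℤ) - k + 1)) := by
  simp only [OmegaEven, omegaEvenCoeff, mul_assoc]

lemma tendsto_OmegaEven_nhds_zero (n : ℕ) :
    Tendsto (OmegaEven n) (𝓝 0) (𝓝 ((-1) ^ (n / 2) * ∑ k ∈ range (n + 1),
      ∑ j ∈ range (k + 1), omegaEvenCoeff n k j * if k = 2 * j + 1 then 1 else 0)) := by
  rw [funext (OmegaEven_eq_sum_omegaEvenCoeff n)]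
  exact (tendsto_finsetSum _ fun k _ => tendsto_finsetSum _ fun j _ =>
    (tendsto_F21_sq_div_Gamma_mul_zpow _ _ j k).const_mul _).const_mul _

lemma omegaEvenCoeff_two_mul_add_one {p m : ℕ} (hm : m < p) :
    omegaEvenCoeff (2 * p) (2 * m + 1) m = -((2 * p)! * (((p - m)! : ℝ) * (m + 1)!)⁻¹) := by
  have hΓ₁ : (((2 * p : ℕ) : ℝ) / 2 - m + 1) = ((p - m : ℕ) : ℝ) + 1 := by
    push_cast [Nat.cast_sub hm.le]; ring
  have hΓ₂ : (((2 * m + 1 : ℕ) : ℝ) - m + 1) = ((m + 1 : ℕ) : ℝ) + 1 := by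
    push_cast; ring
  rw [omegaEvenCoeff, hΓ₁, hΓ₂, Gamma_nat_eq_factorial, Gamma_nat_eq_factorial,
    (odd_two_mul_add_one m).neg_one_pow]
  field_simp

lemma sum_omegaEvenCoeff_mul_ite (p : ℕ) :
    ∑ k ∈ range (2 * p + 1), ∑ j ∈ range (k + 1),
      omegaEvenCoeff (2 * p) k j * (if k = 2 * j + 1 then 1 else 0) =
      -((2 ^ (p + 1) - 2) * (2 * p)! / (p + 1)!) := by
  simp only [mul_ite, mul_one, mul_zero]
  rw [sum_range_sum_range_ite_eq_two_mul_add_one,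
    sum_congr rfl fun m hm => omegaEvenCoeff_two_mul_add_one (mem_range.mp hm),
    sum_neg_distrib, ← mul_sum, sum_range_inv_factorial_mul_factorial]
  ring

/-- Eq. (35): the limit of `Ω_n(r)` as `r → 0⁺`, for even `n`. -/
theorem OmegaEven_limit_at_zero (n : ℕ) (hn : Even n) :
    Tendsto (fun r : ℝ => OmegaEven n r) (nhdsWithin 0 (Set.Ioi 0))
      (nhds (2 * (-1:ℝ)^(n/2 + 1) * ((2:ℝ)^(n/2) - 1) * (n.factorial : ℝ) /
        ((n/2 + 1).factorial : ℝ))) := by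
  obtain ⟨p, rfl⟩ : ∃ p, n = 2 * p := hn.exists_two_nsmul _
  convert (tendsto_OmegaEven_nhds_zero (2 * p)).mono_left nhdsWithin_le_nhds using 2
  rw [sum_omegaEvenCoeff_mul_ite, Nat.mul_div_cancel_left p two_pos]
  ring
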